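/- arXiv:1309.6102 — 2 statements merged into one kernel-verified Lean document; each statement's English description precedes it below -/
import Mathlib

section
/- Let M > 0, h ≥ 1, R > 1, and let ω ∈ C^∞(ℝ) satisfy |ω(ξ)| ≤ 1 for all ξ, ω(ξ) = 0 for |ξ| ≤ 1, and ω constant on each of {ξ ≥ R} and {ξ ≤ −R}. Define λ(x,ξ) := M·ω(ξ/h)·∫₀ˣ ⟨y⟩^{-1} dy. Then for every integer α ≥ 1 there exists C_α > 0 (depending on α, M, R, ω but not on h, x, ξ) such that, for either choice of sign, |∂_ξ^α e^{±λ(x,ξ)}| ≤ C_α·(1 + ln⟨x⟩·χ_{E_{h,R}}(ξ))^α·⟨ξ⟩_h^{−α}·e^{±λ(x,ξ)} for all x, ξ ∈ ℝ, where χ_{E_{h,R}} is the characteristic function of E_{h,R} = {ξ ∈ ℝ : h ≤ |ξ| ≤ hR}. -/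
/-!
Since `∫₀ˣ ⟨y⟩⁻¹ dy = arsinh x` and `|arsinh x| ≤ 1 + log ⟨x⟩`, we have `e^{±λ} = exp (c ω(ξ/h))`
with `1 + |c| ≤ (1 + |M|)(1 + log ⟨x⟩)`. Off `E_{h,R}` the map `ξ ↦ ω(ξ/h)` is locally constant,
so all its `ξ`-derivatives vanish there. On `E_{h,R}` we have `⟨ξ⟩_h ≤ ⟨R⟩ h`; the `i`-th
derivative of `c ω(ξ/h)` is at most `|c| sup |ω⁽ⁱ⁾| h⁻ⁱ`, finite because for `i ≥ 1` the function
`ω⁽ⁱ⁾` is continuous and supported in `[-R, R]`; and the Faà di Bruno bound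
`|(exp ∘ g)⁽ⁿ⁾| ≤ n! e^g Dⁿ`, valid when `|g⁽ⁱ⁾| ≤ Dⁱ` for `1 ≤ i ≤ n`, concludes.
-/

open MeasureTheory Real

noncomputable section

/-- The Japanese bracket `⟨x⟩ = (1 + x²)^(1/2)`. -/
def jb (x : ℝ) : ℝ := Real.sqrt (1 + x ^ 2)

/-- `⟨ξ⟩ₕ = (h² + ξ²)^(1/2)`. -/
def jbh (h ξ : ℝ) : ℝ := Real.sqrt (h ^ 2 + ξ ^ 2)

open Filter Topology
open scoped Nat

lemma one_le_jb (x : ℝ) : 1 ≤ jb x :=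
  one_le_sqrt.mpr (le_add_of_nonneg_right (sq_nonneg x))

lemma integral_inv_jb (x : ℝ) : ∫ y in (0:ℝ)..x, (jb y)⁻¹ = arsinh x := by
  have hcont : Continuous fun y => (jb y)⁻¹ :=
    (continuous_const.add (continuous_pow 2)).sqrt.inv₀ fun y =>
      (zero_lt_one.trans_le (one_le_jb y)).ne'
  rw [intervalIntegral.integral_eq_sub_of_hasDerivAt
    (fun y _ => by simpa only [jb] using hasDerivAt_arsinh y) (hcont.intervalIntegrable 0 x), arsinh_zero, sub_zero]

lemma abs_arsinh_le_one_add_log_jb (x : ℝ) : |arsinh x| ≤ 1 + log (jb x) := by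
  have habs : |arsinh x| = arsinh |x| := by
    rcases le_total 0 x with hx | hx
    · rw [abs_of_nonneg hx, abs_of_nonneg (arsinh_nonneg_iff.mpr hx)]
    · rw [abs_of_nonpos hx, abs_of_nonpos (arsinh_nonpos_iff.mpr hx), arsinh_neg]
  have hjb_pos : 0 < jb x := zero_lt_one.trans_le (one_le_jb x)
  have hx_le : |x| ≤ jb x := by
    rw [jb, ← sqrt_sq_eq_abs]
    exact sqrt_le_sqrt (by linarith)
  calc |arsinh x| = log (|x| + jb x) := by rw [habs, arsinh, sq_abs, jb]
    _ ≤ log (2 * jb x) := log_le_log (by positivity) (by linarith)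
    _ = log 2 + log (jb x) := log_mul two_ne_zero hjb_pos.ne'
    _ ≤ 1 + log (jb x) := by linarith [log_two_lt_d9]

lemma one_add_abs_mul_integral_inv_jb_le {s : ℝ} (hs : |s| ≤ 1) (M x : ℝ) :
    1 + |s * M * ∫ y in (0:ℝ)..x, (jb y)⁻¹| ≤ (1 + |M|) * (1 + log (jb x)) := by
  rw [abs_mul, abs_mul, integral_inv_jb]
  have hL : 0 ≤ log (jb x) := log_nonneg (one_le_jb x)
  have hsM : |s| * |M| * |arsinh x| ≤ |M| * (1 + log (jb x)) :=
    mul_le_mul (mul_le_of_le_one_left (abs_nonneg M) hs) (abs_arsinh_le_one_add_log_jb x)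
      (abs_nonneg _) (abs_nonneg M)
  nlinarith [abs_nonneg M]

lemma jbh_pos {h : ℝ} (hh : 0 < h) (ξ : ℝ) : 0 < jbh h ξ :=
  sqrt_pos.mpr (by positivity)

lemma jbh_le_of_abs_le {h R ξ : ℝ} (hh : 0 ≤ h) (hξ : |ξ| ≤ h * R) :
    jbh h ξ ≤ √(1 + R ^ 2) * h := by
  rw [jbh, show √(1 + R ^ 2) * h = √((1 + R ^ 2) * h ^ 2) by
    rw [sqrt_mul (by positivity), sqrt_sq hh]]
  apply Real.sqrt_le_sqrt
  nlinarith [sq_le_sq' (abs_le.mp hξ).1 (abs_le.mp hξ).2]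

lemma iteratedDeriv_eq_zero_of_eventuallyEq_const {𝕜 F : Type*} [NontriviallyNormedField 𝕜]
    [NormedAddCommGroup F] [NormedSpace 𝕜 F] {f : 𝕜 → F} {x : 𝕜} {c : F} {n : ℕ} (hn : n ≠ 0)
    (hf : f =ᶠ[𝓝 x] fun _ => c) : iteratedDeriv n f x = 0 := by
  rw [hf.iteratedDeriv_eq, iteratedDeriv_const, if_neg hn]

lemma iteratedDeriv_const_mul_comp_div {f : ℝ → ℝ} {n : ℕ} (hf : ContDiff ℝ n f) (c h ξ : ℝ) :
    iteratedDeriv n (fun y => c * f (y / h)) ξ = c * h⁻¹ ^ n * iteratedDeriv n f (ξ / h) := by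
  simp only [div_eq_inv_mul]
  rw [iteratedDeriv_const_mul_field, iteratedDeriv_comp_const_mul hf, mul_assoc]

lemma abs_iteratedDeriv_exp_comp_le {g : ℝ → ℝ} {n : ℕ} (hg : ContDiff ℝ n g) {x D : ℝ}
    (hD : ∀ i, 1 ≤ i → i ≤ n → |iteratedDeriv i g x| ≤ D ^ i) :
    |iteratedDeriv n (fun y => exp (g y)) x| ≤ n ! * exp (g x) * D ^ n := by
  have hexp_deriv : ∀ i, i ≤ n → ‖iteratedFDeriv ℝ i exp (g x)‖ ≤ exp (g x) := fun i _ => by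
    rw [norm_iteratedFDeriv_eq_norm_iteratedDeriv, iteratedDeriv_eq_iterate, iter_deriv_exp,
      norm_of_nonneg (exp_pos _).le]
  simpa only [norm_iteratedFDeriv_eq_norm_iteratedDeriv, norm_eq_abs, Function.comp_def] using
    norm_iteratedFDeriv_comp_le contDiff_exp hg le_rfl x hexp_deriv fun i hi hin => by
      simpa only [norm_iteratedFDeriv_eq_norm_iteratedDeriv, norm_eq_abs] using hD i hi hin

section Profile

variable {ω : ℝ → ℝ} {R : ℝ} (hω0 : ∀ ξ : ℝ, |ξ| ≤ 1 → ω ξ = 0)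
  (hωcp : ∀ ξ₁ ξ₂ : ℝ, R ≤ ξ₁ → R ≤ ξ₂ → ω ξ₁ = ω ξ₂)
  (hωcm : ∀ ξ₁ ξ₂ : ℝ, ξ₁ ≤ -R → ξ₂ ≤ -R → ω ξ₁ = ω ξ₂)
include hωcp hωcm

lemma eventuallyEq_const_of_lt_abs {η : ℝ} (hη : R < |η|) : ω =ᶠ[𝓝 η] fun _ => ω η := by
  rcases lt_abs.mp hη with hη | hη
  · filter_upwards [Ioi_mem_nhds hη] with ζ hζ using hωcp ζ η hζ.le hη.le
  · have hη' : η < -R := by linarith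
    filter_upwards [Iio_mem_nhds hη'] with ζ hζ using hωcm ζ η hζ.le hη'.le

lemma exists_bound_iteratedDeriv {i : ℕ} (hω : ContDiff ℝ i ω) (hi : i ≠ 0) :
    ∃ A, ∀ ζ, |iteratedDeriv i ω ζ| ≤ A := by
  have hsupp : HasCompactSupport (iteratedDeriv i ω) :=
    HasCompactSupport.intro (isCompact_Icc (a := -R) (b := R)) fun ζ hζ =>
      iteratedDeriv_eq_zero_of_eventuallyEq_const hi
        (eventuallyEq_const_of_lt_abs hωcp hωcm (by
          rw [Set.mem_Icc, ← abs_le] at hζ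
          exact not_le.mp hζ))
  exact hsupp.exists_bound_of_continuous (hω.continuous_iteratedDeriv i le_rfl)

lemma exists_bound_iteratedDeriv_of_le {n : ℕ} (hω : ContDiff ℝ n ω) :
    ∃ A, 0 ≤ A ∧ ∀ i, 1 ≤ i → i ≤ n → ∀ ζ, |iteratedDeriv i ω ζ| ≤ A := by
  induction n with
  | zero => exact ⟨0, le_rfl, fun i hi hi0 => by omega⟩
  | succ n ih =>
    obtain ⟨A, hA0, hA⟩ := ih (hω.of_le (by exact_mod_cast n.le_succ))
    obtain ⟨B, hB⟩ := exists_bound_iteratedDeriv hωcp hωcm hω n.succ_ne_zero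
    refine ⟨max A B, le_max_of_le_left hA0, fun i hi hin ζ => ?_⟩
    rcases Nat.le_succ_iff.mp hin with hin | rfl
    · exact (hA i hi hin ζ).trans (le_max_left A B)
    · exact (hB ζ).trans (le_max_right A B)

include hω0 in
lemma comp_div_eventuallyEq_const {h ξ : ℝ} (hh : 0 < h)
    (hξ : ξ ∉ {ζ : ℝ | h ≤ |ζ| ∧ |ζ| ≤ h * R}) :
    (fun y => ω (y / h)) =ᶠ[𝓝 ξ] fun _ => ω (ξ / h) := by
  have hev : ω =ᶠ[𝓝 (ξ / h)] fun _ => ω (ξ / h) := by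
    rw [Set.mem_ofPred_eq, not_and_or, not_le, not_le] at hξ
    rcases hξ with hξ | hξ
    · have hlt : |ξ / h| < 1 := by rwa [abs_div, abs_of_pos hh, div_lt_one hh]
      filter_upwards [(isOpen_lt continuous_abs continuous_const).mem_nhds hlt] with ζ hζ
      rw [hω0 ζ (le_of_lt hζ), hω0 _ hlt.le]
    · exact eventuallyEq_const_of_lt_abs hωcp hωcm
        (by rwa [abs_div, abs_of_pos hh, lt_div_iff₀ hh, mul_comm])
  exact hev.comp_tendsto ((continuous_id.div_const h).tendsto ξ)

end Profile

lemma abs_iteratedDeriv_exp_const_mul_comp_div_le {ω : ℝ → ℝ} {n : ℕ} (hω : ContDiff ℝ n ω)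
    {A : ℝ} (hA0 : 0 ≤ A) (hA : ∀ i, 1 ≤ i → i ≤ n → ∀ ζ, |iteratedDeriv i ω ζ| ≤ A)
    (c : ℝ) {h : ℝ} (hh : 0 < h) (ξ : ℝ) :
    |iteratedDeriv n (fun y => exp (c * ω (y / h))) ξ| ≤
      n ! * exp (c * ω (ξ / h)) * ((1 + |c|) * (1 + A) / h) ^ n := by
  refine abs_iteratedDeriv_exp_comp_le (g := fun y => c * ω (y / h))
    (contDiff_const.mul (hω.comp (contDiff_id.div_const h))) fun i hi hin => ?_
  have hbase : 1 ≤ (1 + |c|) * (1 + A) := by nlinarith [abs_nonneg c]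
  rw [iteratedDeriv_const_mul_comp_div (hω.of_le (by exact_mod_cast hin))]
  calc |c * h⁻¹ ^ i * iteratedDeriv i ω (ξ / h)|
        = |c| * h⁻¹ ^ i * |iteratedDeriv i ω (ξ / h)| := by
          rw [abs_mul, abs_mul, abs_of_pos (by positivity : 0 < h⁻¹ ^ i)]
    _ ≤ |c| * h⁻¹ ^ i * A := by gcongr; exact hA i hi hin _
    _ ≤ (1 + |c|) * (1 + A) * h⁻¹ ^ i := by
        rw [mul_right_comm]; gcongr <;> linarith
    _ ≤ ((1 + |c|) * (1 + A)) ^ i * h⁻¹ ^ i := by gcongr; exact le_self_pow₀ hbase (by omega)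
    _ = ((1 + |c|) * (1 + A) / h) ^ i := by rw [← mul_pow, div_eq_mul_inv]

lemma abs_iteratedDeriv_exp_const_mul_comp_div_le_of_abs_le {ω : ℝ → ℝ} {n : ℕ}
    (hω : ContDiff ℝ n ω) {A : ℝ} (hA0 : 0 ≤ A)
    (hA : ∀ i, 1 ≤ i → i ≤ n → ∀ ζ, |iteratedDeriv i ω ζ| ≤ A)
    (c : ℝ) {h R ξ : ℝ} (hh : 0 < h) (hξ : |ξ| ≤ h * R) :
    |iteratedDeriv n (fun y => exp (c * ω (y / h))) ξ| ≤
      n ! * ((1 + |c|) * (1 + A) * √(1 + R ^ 2) / jbh h ξ) ^ n * exp (c * ω (ξ / h)) := by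
  have hJ := jbh_pos hh ξ
  have hhJ : 1 / h ≤ √(1 + R ^ 2) / jbh h ξ := by
    rw [div_le_div_iff₀ hh hJ, one_mul]
    exact jbh_le_of_abs_le hh.le hξ
  calc _ ≤ n ! * exp (c * ω (ξ / h)) * ((1 + |c|) * (1 + A) * (1 / h)) ^ n := by
        simpa only [mul_one_div] using
          abs_iteratedDeriv_exp_const_mul_comp_div_le hω hA0 hA c hh ξ
    _ ≤ n ! * exp (c * ω (ξ / h)) * ((1 + |c|) * (1 + A) * (√(1 + R ^ 2) / jbh h ξ)) ^ n := by
        gcongr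
    _ = _ := by rw [mul_div_assoc]; ring

theorem stmt5_general (M R : ℝ)
    (ω : ℝ → ℝ) (hω : ContDiff ℝ (⊤ : ℕ∞) ω)
    (hω0 : ∀ ξ : ℝ, |ξ| ≤ 1 → ω ξ = 0)
    (hωcp : ∀ ξ₁ ξ₂ : ℝ, R ≤ ξ₁ → R ≤ ξ₂ → ω ξ₁ = ω ξ₂)
    (hωcm : ∀ ξ₁ ξ₂ : ℝ, ξ₁ ≤ -R → ξ₂ ≤ -R → ω ξ₁ = ω ξ₂) :
    ∀ α : ℕ, 1 ≤ α → ∃ C > 0, ∀ h : ℝ, 1 ≤ h → ∀ x ξ : ℝ,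
      ∀ s : ℝ, s = 1 ∨ s = -1 →
        |iteratedDeriv α
            (fun ξ' => Real.exp
              (s * (M * ω (ξ' / h) * ∫ y in (0:ℝ)..x, (jb y)⁻¹))) ξ| ≤
          C * (1 + Real.log (jb x) *
              Set.indicator {ζ : ℝ | h ≤ |ζ| ∧ |ζ| ≤ h * R} (fun _ => (1:ℝ)) ξ) ^ α *
            jbh h ξ ^ (-(α : ℝ)) *
            Real.exp (s * (M * ω (ξ / h) * ∫ y in (0:ℝ)..x, (jb y)⁻¹)) := by
  intro α hα
  have hωα : ContDiff ℝ α ω := hω.of_le (by exact_mod_cast le_top)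
  obtain ⟨A, hA0, hA⟩ := exists_bound_iteratedDeriv_of_le hωcp hωcm hωα
  refine ⟨α ! * ((1 + |M|) * (1 + A) * √(1 + R ^ 2)) ^ α, by positivity, ?_⟩
  intro h hh x ξ s hs
  have hh0 : 0 < h := zero_lt_one.trans_le hh
  set c := s * M * ∫ y in (0:ℝ)..x, (jb y)⁻¹
  have hphase : ∀ η, s * (M * ω (η / h) * ∫ y in (0:ℝ)..x, (jb y)⁻¹) = c * ω (η / h) :=
    fun η => by ring
  simp only [hphase]
  have hJ := jbh_pos hh0 ξ
  by_cases hE : ξ ∈ {ζ : ℝ | h ≤ |ζ| ∧ |ζ| ≤ h * R}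
  · have hc : 1 + |c| ≤ (1 + |M|) * (1 + log (jb x)) :=
      one_add_abs_mul_integral_inv_jb_le (by rcases hs with rfl | rfl <;> simp) M x
    rw [Set.indicator_of_mem hE, mul_one, rpow_neg hJ.le, rpow_natCast]
    calc _ ≤ α ! * ((1 + |c|) * (1 + A) * √(1 + R ^ 2) / jbh h ξ) ^ α * exp (c * ω (ξ / h)) :=
          abs_iteratedDeriv_exp_const_mul_comp_div_le_of_abs_le hωα hA0 hA c hh0 hE.2
      _ ≤ α ! * ((1 + |M|) * (1 + log (jb x)) * (1 + A) * √(1 + R ^ 2) / jbh h ξ) ^ α *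
            exp (c * ω (ξ / h)) := by gcongr
      _ = _ := by simp only [mul_pow, div_pow]; ring
  · have hloc : (fun y => exp (c * ω (y / h))) =ᶠ[𝓝 ξ] fun _ => exp (c * ω (ξ / h)) :=
      (comp_div_eventuallyEq_const hω0 hωcp hωcm hh0 hE).fun_comp fun t => exp (c * t)
    rw [Set.indicator_of_notMem hE, mul_zero, add_zero,
      iteratedDeriv_eq_zero_of_eventuallyEq_const (by omega) hloc, abs_zero]
    positivity

/-- estimates for `∂_ξ^α e^{±λ(x,ξ)}`, `α ≥ 1`, where
`λ(x,ξ) = M·ω(ξ/h)·∫₀ˣ ⟨y⟩⁻¹ dy`; the constant may depend on `α, M, R, ω` but not on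
`h, x, ξ`. -/
theorem stmt5 (M R : ℝ) (hM : 0 < M) (hR : 1 < R)
    (ω : ℝ → ℝ) (hω : ContDiff ℝ (⊤ : ℕ∞) ω) (hωb : ∀ ξ : ℝ, |ω ξ| ≤ 1)
    (hω0 : ∀ ξ : ℝ, |ξ| ≤ 1 → ω ξ = 0)
    (hωcp : ∀ ξ₁ ξ₂ : ℝ, R ≤ ξ₁ → R ≤ ξ₂ → ω ξ₁ = ω ξ₂)
    (hωcm : ∀ ξ₁ ξ₂ : ℝ, ξ₁ ≤ -R → ξ₂ ≤ -R → ω ξ₁ = ω ξ₂) :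
    ∀ α : ℕ, 1 ≤ α → ∃ C > 0, ∀ h : ℝ, 1 ≤ h → ∀ x ξ : ℝ,
      ∀ s : ℝ, s = 1 ∨ s = -1 →
        |iteratedDeriv α
            (fun ξ' => Real.exp
              (s * (M * ω (ξ' / h) * ∫ y in (0:ℝ)..x, (jb y)⁻¹))) ξ| ≤
          C * (1 + Real.log (jb x) *
              Set.indicator {ζ : ℝ | h ≤ |ζ| ∧ |ζ| ≤ h * R} (fun _ => (1:ℝ)) ξ) ^ α *
            jbh h ξ ^ (-(α : ℝ)) *
            Real.exp (s * (M * ω (ξ / h) * ∫ y in (0:ℝ)..x, (jb y)⁻¹)) :=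
  stmt5_general M R ω hω hω0 hωcp hωcm
end
end

section
/- Let p ≥ 2 be an integer, T > 0, h ≥ 1, R > 1, C_p > 0, C > 0. Let a_p : [0,T] × ℝ → ℝ be such that ξ ↦ a_p(t,ξ) is differentiable and |∂_ξ a_p(t,ξ)| ≥ C_p·|ξ|^{p−1} for all t ∈ [0,T] and |ξ| ≥ R. Let ω : ℝ → ℝ satisfy ω(ξ) = sgn(∂_ξ a_p(t,ξ)) for all |ξ| ≥ R and all t ∈ [0,T]. Let b : [0,T] × ℝ × ℝ → ℂ satisfy |Im b(t,x,ξ)| ≤ C·⟨ξ⟩_h^{p−1}·⟨x⟩^{−1} for all t, x, ξ. If M ≥ 2^{(p−1)/2}·C/C_p, then for all t ∈ [0,T], x ∈ ℝ, and ξ with |ξ| ≥ hR, one has −Im b(t,x,ξ) + M·∂_ξ a_p(t,ξ)·ω(ξ/h)·⟨x⟩^{−1} ≥ (2^{−(p−1)/2}·C_p·M − C)·⟨ξ⟩_h^{p−1}·⟨x⟩^{−1} ≥ 0. -/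
/-! On each half-line `±ξ ≥ R` the derivative `∂_ξ a_p(t,·)` does not vanish, hence by Darboux's
theorem keeps a constant sign; as `ξ` and `ξ/h` lie on the same half-line,
`∂_ξ a_p(t,ξ) ω(ξ/h) = |∂_ξ a_p(t,ξ)| ≥ C_p |ξ|^{p-1}`. For `|ξ| ≥ h` we have `⟨ξ⟩_h ≤ √2 |ξ|`,
so this dominates `2^{-(p-1)/2} C_p ⟨ξ⟩_h^{p-1}`, while `-Im b ≥ -C ⟨ξ⟩_h^{p-1} ⟨x⟩⁻¹`. -/

open MeasureTheory Real

noncomputable section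

theorem jb_pos (x : ℝ) : 0 < jb x :=
  Real.sqrt_pos.2 (by positivity)

theorem jbh_nonneg (h ξ : ℝ) : 0 ≤ jbh h ξ :=
  Real.sqrt_nonneg _

theorem jbh_le_sqrt_two_mul_abs {h ξ : ℝ} (hξ : |h| ≤ |ξ|) : jbh h ξ ≤ √2 * |ξ| := by
  rw [jbh, ← Real.sqrt_sq_eq_abs, ← Real.sqrt_mul zero_le_two]
  exact Real.sqrt_le_sqrt (by nlinarith [sq_le_sq.2 hξ])

theorem two_rpow_neg_mul_jbh_pow_le {h ξ : ℝ} (hξ : |h| ≤ |ξ|) (n : ℕ) :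
    (2 : ℝ) ^ (-((n : ℝ) / 2)) * jbh h ξ ^ n ≤ |ξ| ^ n := by
  have hsqrt : √2 ^ n = (2 : ℝ) ^ ((n : ℝ) / 2) := by
    rw [Real.sqrt_eq_rpow, ← Real.rpow_natCast, ← Real.rpow_mul zero_le_two, one_div_mul_eq_div]
  calc (2 : ℝ) ^ (-((n : ℝ) / 2)) * jbh h ξ ^ n
      ≤ (2 : ℝ) ^ (-((n : ℝ) / 2)) * (√2 * |ξ|) ^ n := by
        gcongr
        · exact jbh_nonneg h ξ
        · exact jbh_le_sqrt_two_mul_abs hξ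
    _ = |ξ| ^ n := by
        rw [mul_pow, hsqrt, ← mul_assoc, ← Real.rpow_add zero_lt_two, neg_add_cancel,
          Real.rpow_zero, one_mul]

theorem mul_sign_self (r : ℝ) : r * Real.sign r = |r| := by
  rcases lt_trichotomy r 0 with hr | rfl | hr
  · rw [Real.sign_of_neg hr, abs_of_neg hr, mul_neg_one]
  · simp
  · rw [Real.sign_of_pos hr, abs_of_pos hr, mul_one]

theorem sign_deriv_eq_of_convex {f : ℝ → ℝ} (hf : Differentiable ℝ f) {s : Set ℝ}
    (hs : Convex ℝ s) (hne : ∀ z ∈ s, deriv f z ≠ 0) {x y : ℝ} (hx : x ∈ s) (hy : y ∈ s) : Real.sign (deriv f x) = Real.sign (deriv f y) := by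
  rcases hasDerivWithinAt_forall_lt_or_forall_gt_of_forall_ne hs
      (fun z _ => (hf z).hasDerivAt.hasDerivWithinAt) hne with H | H
  · rw [Real.sign_of_neg (H x hx), Real.sign_of_neg (H y hy)]
  · rw [Real.sign_of_pos (H x hx), Real.sign_of_pos (H y hy)]

theorem sign_deriv_eq_of_le_abs {f : ℝ → ℝ} (hf : Differentiable ℝ f) {R : ℝ}
    (hne : ∀ z, R ≤ |z| → deriv f z ≠ 0) {x y : ℝ} (hx : R ≤ |x|) (hy : R ≤ |y|) (hxy : 0 < x * y) :
    Real.sign (deriv f x) = Real.sign (deriv f y) := by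
  rcases (pos_and_pos_or_neg_and_neg_of_mul_pos hxy) with ⟨hx0, hy0⟩ | ⟨hx0, hy0⟩
  · refine sign_deriv_eq_of_convex hf (convex_Ici R) (fun z hz => hne z ?_) ?_ ?_
    · exact hz.out.trans (le_abs_self z)
    · simpa [abs_of_pos hx0] using hx
    · simpa [abs_of_pos hy0] using hy
  · refine sign_deriv_eq_of_convex hf (convex_Iic (-R)) (fun z hz => hne z ?_) ?_ ?_
    · exact (le_neg.1 hz.out).trans (neg_le_abs z)
    · exact le_neg.1 (by simpa [abs_of_neg hx0] using hx)
    · exact le_neg.1 (by simpa [abs_of_neg hy0] using hy)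

theorem deriv_mul_sign_deriv_div_eq_abs {f : ℝ → ℝ} (hf : Differentiable ℝ f) {R : ℝ}
    (hR : 0 < R) (hne : ∀ z, R ≤ |z| → deriv f z ≠ 0) {h ξ : ℝ} (hh : 0 < h) (hξ : R ≤ |ξ|)
    (hξh : R ≤ |ξ / h|) : deriv f ξ * Real.sign (deriv f (ξ / h)) = |deriv f ξ| := by
  have hξ0 : ξ ≠ 0 := abs_pos.1 (hR.trans_le hξ)
  have hpos : 0 < ξ * (ξ / h) := by rw [mul_div_assoc']; exact div_pos (mul_self_pos.2 hξ0) hh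
  rw [sign_deriv_eq_of_le_abs hf hne hξh hξ (by rwa [mul_comm]), mul_sign_self]

theorem le_rpow_neg_mul_mul_of_rpow_mul_div_le {a s c C M : ℝ} (ha : 0 < a) (hc : 0 < c)
    (h : a ^ s * C / c ≤ M) : C ≤ a ^ (-s) * c * M := by
  rw [Real.rpow_neg ha.le, mul_assoc, inv_mul_eq_div, le_div_iff₀' (by positivity), mul_comm c]
  rwa [div_le_iff₀ hc] at h

theorem stmt11_general (p : ℕ) (hp : 2 ≤ p) (T h R Cp C : ℝ)
    (hh : 1 ≤ h) (hR : 1 < R) (hCp : 0 < Cp) (hC : 0 < C)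
    (ap : ℝ → ℝ → ℝ)
    (hap_diff : ∀ t ∈ Set.Icc (0:ℝ) T, Differentiable ℝ (ap t))
    (hap_low : ∀ t ∈ Set.Icc (0:ℝ) T, ∀ ξ : ℝ, R ≤ |ξ| →
      Cp * |ξ| ^ (p - 1) ≤ |deriv (ap t) ξ|)
    (ω : ℝ → ℝ)
    (hω : ∀ t ∈ Set.Icc (0:ℝ) T, ∀ ξ : ℝ, R ≤ |ξ| →
      ω ξ = Real.sign (deriv (ap t) ξ))
    (b : ℝ → ℝ → ℝ → ℂ)
    (hb : ∀ t ∈ Set.Icc (0:ℝ) T, ∀ x ξ : ℝ,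
      |(b t x ξ).im| ≤ C * jbh h ξ ^ (p - 1) * (jb x)⁻¹)
    (M : ℝ) (hM : (2:ℝ) ^ (((p:ℝ) - 1) / 2) * C / Cp ≤ M) :
    ∀ t ∈ Set.Icc (0:ℝ) T, ∀ x ξ : ℝ, h * R ≤ |ξ| →
      ((2:ℝ) ^ (-(((p:ℝ) - 1) / 2)) * Cp * M - C) * jbh h ξ ^ (p - 1) * (jb x)⁻¹ ≤
          -(b t x ξ).im + M * deriv (ap t) ξ * ω (ξ / h) * (jb x)⁻¹ ∧
        0 ≤ ((2:ℝ) ^ (-(((p:ℝ) - 1) / 2)) * Cp * M - C) * jbh h ξ ^ (p - 1) * (jb x)⁻¹ := by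
  intro t ht x ξ hξ
  have hn : ((p - 1 : ℕ) : ℝ) = p - 1 := by rw [Nat.cast_sub (by omega), Nat.cast_one]
  have hR0 : 0 < R := one_pos.trans hR
  have hh0 : 0 < h := one_pos.trans_le hh
  have hξR : R ≤ |ξ| := (le_mul_of_one_le_left hR0.le hh).trans hξ
  have hξhR : R ≤ |ξ / h| := by rwa [abs_div, abs_of_pos hh0, le_div_iff₀' hh0]
  have hd_ne : ∀ z, R ≤ |z| → deriv (ap t) z ≠ 0 := fun z hz =>
    abs_pos.1 ((mul_pos hCp (pow_pos (hR0.trans_le hz) _)).trans_le (hap_low t ht z hz))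
  have hdω : deriv (ap t) ξ * ω (ξ / h) = |deriv (ap t) ξ| := by
    rw [hω t ht _ hξhR, deriv_mul_sign_deriv_div_eq_abs (hap_diff t ht) hR0 hd_ne hh0 hξR hξhR]
  have hM0 : 0 ≤ M := le_trans (by positivity) hM
  have hC_le : C ≤ (2:ℝ) ^ (-(((p:ℝ) - 1) / 2)) * Cp * M :=
    le_rpow_neg_mul_mul_of_rpow_mul_div_le zero_lt_two hCp hM
  have hhξ : |h| ≤ |ξ| := by
    rw [abs_of_pos hh0]; exact (le_mul_of_one_le_right hh0.le hR.le).trans hξ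
  have hJ := two_rpow_neg_mul_jbh_pow_le hhξ (p - 1)
  have hX := (inv_pos.2 (jb_pos x)).le
  have hJ0 := pow_nonneg (jbh_nonneg h ξ) (p - 1)
  rw [hn] at hJ
  have hdJ : M * (Cp * ((2:ℝ) ^ (-(((p:ℝ) - 1) / 2)) * jbh h ξ ^ (p - 1))) ≤
      M * |deriv (ap t) ξ| :=
    mul_le_mul_of_nonneg_left
      ((mul_le_mul_of_nonneg_left hJ hCp.le).trans (hap_low t ht ξ hξR)) hM0
  refine ⟨?_, mul_nonneg (mul_nonneg (sub_nonneg.2 hC_le) hJ0) hX⟩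
  rw [mul_assoc M, hdω]
  linarith [mul_le_mul_of_nonneg_right hdJ hX, le_abs_self (b t x ξ).im, hb t ht x ξ]

/-- positivity of the term of order `p-1` after the first conjugation.
If `|∂_ξ a_p(t,ξ)| ≥ C_p|ξ|^{p-1}` for `|ξ| ≥ R`, `ω(ξ) = sgn(∂_ξ a_p(t,ξ))` for
`|ξ| ≥ R`, `|Im b(t,x,ξ)| ≤ C⟨ξ⟩ₕ^{p-1}⟨x⟩⁻¹` and `M ≥ 2^{(p-1)/2}·C/C_p`, then for
`|ξ| ≥ hR` one has
`-Im b + M·∂_ξa_p·ω(ξ/h)·⟨x⟩⁻¹ ≥ (2^{-(p-1)/2}C_pM - C)·⟨ξ⟩ₕ^{p-1}·⟨x⟩⁻¹ ≥ 0`. -/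
theorem stmt11 (p : ℕ) (hp : 2 ≤ p) (T h R Cp C : ℝ)
    (hT : 0 < T) (hh : 1 ≤ h) (hR : 1 < R) (hCp : 0 < Cp) (hC : 0 < C)
    (ap : ℝ → ℝ → ℝ)
    (hap_diff : ∀ t ∈ Set.Icc (0:ℝ) T, Differentiable ℝ (ap t))
    (hap_low : ∀ t ∈ Set.Icc (0:ℝ) T, ∀ ξ : ℝ, R ≤ |ξ| →
      Cp * |ξ| ^ (p - 1) ≤ |deriv (ap t) ξ|)
    (ω : ℝ → ℝ)
    (hω : ∀ t ∈ Set.Icc (0:ℝ) T, ∀ ξ : ℝ, R ≤ |ξ| →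
      ω ξ = Real.sign (deriv (ap t) ξ))
    (b : ℝ → ℝ → ℝ → ℂ)
    (hb : ∀ t ∈ Set.Icc (0:ℝ) T, ∀ x ξ : ℝ,
      |(b t x ξ).im| ≤ C * jbh h ξ ^ (p - 1) * (jb x)⁻¹)
    (M : ℝ) (hM : (2:ℝ) ^ (((p:ℝ) - 1) / 2) * C / Cp ≤ M) :
    ∀ t ∈ Set.Icc (0:ℝ) T, ∀ x ξ : ℝ, h * R ≤ |ξ| →
      ((2:ℝ) ^ (-(((p:ℝ) - 1) / 2)) * Cp * M - C) * jbh h ξ ^ (p - 1) * (jb x)⁻¹ ≤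
          -(b t x ξ).im + M * deriv (ap t) ξ * ω (ξ / h) * (jb x)⁻¹ ∧
        0 ≤ ((2:ℝ) ^ (-(((p:ℝ) - 1) / 2)) * Cp * M - C) * jbh h ξ ^ (p - 1) * (jb x)⁻¹ :=
  stmt11_general p hp T h R Cp C hh hR hCp hC ap hap_diff hap_low ω hω b hb M hM
end
end
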